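/- Let λ ∈ ℂ with λ ≠ 0 and λ ≠ 1, and let n ≥ 2 be an integer. Then for every x ∈ [0,1], the series ∑_{k∈ℤ} e^{2πikx}/(2πik − log λ)^n converges absolutely and 𝓑_n(x;λ) = −(n!/λ^x) · ∑_{k∈ℤ} e^{2πikx}/(2πik − log λ)^n. -/

import Mathlib

noncomputable def ABnum (lam : ℂ) : ℕ → ℂ
  | 0 => 0
  | n + 1 =>
    ((if n = 0 then 1 else 0) -
        lam * ∑ k ∈ (Finset.range (n + 1)).attach,
          (((n + 1).choose k.1 : ℕ) : ℂ) * ABnum lam k.1) / (lam - 1)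
decreasing_by exact Finset.mem_range.mp k.2

/-- The Apostol–Bernoulli polynomial `𝓑_n(x;λ)`. -/
noncomputable def ABpoly (lam : ℂ) (n : ℕ) (x : ℂ) : ℂ :=
  ∑ k ∈ Finset.range (n + 1), ((n.choose k : ℕ) : ℂ) * ABnum lam k * x ^ (n - k)

/-!
For `n ≠ 1` the function `λ^x 𝓑_n(x;λ)` takes the same value at `0` and `1`, and
`(λ^x 𝓑_{n+1})' = log λ · λ^x 𝓑_{n+1} + (n + 1) λ^x 𝓑_n`. Integrating by parts against `e^{-2πikx}`
turns this into the recurrence `(2πik - log λ) c_{n+1} = (n + 1) c_n - δ_{n,0}` for its Fourier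
coefficients on `[0, 1]`, so `c_n = -n! / (2πik - log λ)^n`. For `n ≥ 2` these coefficients are
absolutely summable, hence the Fourier series converges pointwise to the continuous periodic
extension of `λ^x 𝓑_n(x;λ)`, including at the endpoints.
-/

open Complex Real MeasureTheory Finset
open scoped Nat

lemma fourierCoeffOn_zero_one_eq_integral (g : ℝ → ℂ) (k : ℤ) :
    fourierCoeffOn zero_lt_one g k = ∫ x in (0 : ℝ)..1, exp (-(2 * π * I * k * x)) * g x := by
  simp only [fourierCoeffOn_eq_integral, sub_zero, div_one, one_smul, smul_eq_mul,
    fourier_coe_apply, Int.cast_neg, ofReal_one, mul_neg, neg_mul]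

lemma fourierCoeffOn_zero_one_deriv {g g' : ℝ → ℂ}
    (hg : ∀ x ∈ Set.uIcc (0 : ℝ) 1, HasDerivAt g (g' x) x)
    (hg' : IntervalIntegrable g' volume 0 1) (k : ℤ) :
    fourierCoeffOn zero_lt_one g' k =
      g 1 - g 0 + 2 * π * I * k * fourierCoeffOn zero_lt_one g k := by
  have hexp (x : ℝ) : HasDerivAt (fun y : ℝ => exp (-(2 * π * I * k * y)))
      (-(2 * π * I * k) * exp (-(2 * π * I * k * x))) x := by
    simpa [mul_comm] using ((hasDerivAt_id (x : ℂ)).const_mul (-(2 * π * I * k))).cexp.comp_ofReal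
  have hper : exp (-(2 * π * I * k * ((1 : ℝ) : ℂ))) = 1 :=
    exp_eq_one_iff.mpr ⟨-k, by push_cast; ring⟩
  rw [fourierCoeffOn_zero_one_eq_integral, fourierCoeffOn_zero_one_eq_integral,
    intervalIntegral.integral_mul_deriv_eq_deriv_mul (fun x _ => hexp x) hg
      ((by fun_prop : Continuous _).intervalIntegrable 0 1) hg', hper]
  simp only [ofReal_zero, mul_zero, neg_zero, Complex.exp_zero, mul_assoc,
    intervalIntegral.integral_const_mul]
  ring

lemma fourierCoeffOn_zero_one_const_mul_add_const_mul {f g : ℝ → ℂ} (hf : Continuous f)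
    (hg : Continuous g) (a b : ℂ) (k : ℤ) :
    fourierCoeffOn zero_lt_one (fun x => a * f x + b * g x) k =
      a * fourierCoeffOn zero_lt_one f k + b * fourierCoeffOn zero_lt_one g k := by
  simp only [fourierCoeffOn_zero_one_eq_integral, mul_add, mul_left_comm _ a, mul_left_comm _ b]
  rw [intervalIntegral.integral_add, intervalIntegral.integral_const_mul,
    intervalIntegral.integral_const_mul] <;>
  exact (by fun_prop : Continuous _).intervalIntegrable 0 1

lemma hasSum_fourierCoeffOn_zero_one_mul_exp {g : ℝ → ℂ} (hg : ContinuousOn g (Set.Icc 0 1))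
    (hg01 : g 0 = g 1) (hsum : Summable (fourierCoeffOn zero_lt_one g)) {x : ℝ}
    (hx : x ∈ Set.Icc (0 : ℝ) 1) :
    HasSum (fun k : ℤ => fourierCoeffOn zero_lt_one g k * exp (2 * π * I * k * x)) (g x) := by
  let G : C(UnitAddCircle, ℂ) :=
    ⟨AddCircle.liftIco 1 0 g, AddCircle.liftIco_zero_continuous hg01 (by simpa using hg)⟩
  have hG : fourierCoeff G = fourierCoeffOn zero_lt_one g := by
    ext k
    rw [ContinuousMap.coe_mk]
    simpa using fourierCoeff_liftIco_eq (T := 1) (a := 0) g k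
  have hGx : G x = g x := by
    rcases hx.1.eq_or_lt with rfl | hx0
    · exact AddCircle.liftIco_zero_coe_apply ⟨le_rfl, zero_lt_one⟩
    · rw [ContinuousMap.coe_mk, ← AddCircle.liftIoc_eq_liftIco (by rwa [zero_add])]
      exact AddCircle.liftIoc_zero_coe_apply ⟨hx0, hx.2⟩
  have h := has_pointwise_sum_fourier_series_of_summable (hG ▸ hsum) x
  rw [hG, hGx] at h
  simpa only [fourier_coe_apply, smul_eq_mul, ofReal_one, div_one] using h

lemma summable_norm_inv_two_pi_I_mul_int_sub_pow (c : ℂ) {n : ℕ} (hn : 2 ≤ n) :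
    Summable fun k : ℤ => ‖((2 * π * I * k - c) ^ n)⁻¹‖ := by
  have h2πI : 2 * π * I ≠ 0 := two_pi_I_ne_zero
  have h := (EisensteinSeries.linear_right_summable (-c / (2 * π * I)) 1
    (k := n) (by exact_mod_cast hn)).mul_left ((2 * π * I) ^ n)⁻¹
  refine summable_norm_iff.mpr (h.congr fun k => ?_)
  rw [zpow_natCast, ← mul_inv, ← mul_pow]
  congr 2
  field_simp
  push_cast
  ring

lemma eq_neg_factorial_div_pow_of_recurrence {K : Type*} [Field K] {c : ℕ → K} {ν : K}
    (h0 : c 0 = 0) (hrec : ∀ n : ℕ, ν * c (n + 1) = (n + 1) * c n - if n = 0 then 1 else 0)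
    {n : ℕ} (hn : n ≠ 0) : c n = -n ! / ν ^ n := by
  -- the case `n = 0` of the recurrence reads `ν * c 1 = -1`
  have hν : ν ≠ 0 := by
    rintro rfl
    simpa [h0] using hrec 0
  induction n with
  | zero => exact absurd rfl hn
  | succ n ih =>
    rw [eq_div_iff (pow_ne_zero _ hν)]
    rcases eq_or_ne n 0 with rfl | hn0
    · simpa [h0, mul_comm] using hrec 0
    · have h := hrec n
      rw [if_neg hn0, sub_zero, ih hn0] at h
      rw [Nat.factorial_succ, pow_succ', Nat.cast_mul, ← mul_assoc, mul_comm _ ν, h]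
      field_simp
      push_cast
      ring

lemma ABnum_succ (lam : ℂ) (n : ℕ) :
    ABnum lam (n + 1) = ((if n = 0 then 1 else 0) -
      lam * ∑ k ∈ range (n + 1), ((n + 1).choose k : ℂ) * ABnum lam k) / (lam - 1) := by
  rw [ABnum, ← sum_attach (range (n + 1)) (fun k => ((n + 1).choose k : ℂ) * ABnum lam k)]

lemma ABpoly_zero (lam x : ℂ) : ABpoly lam 0 x = 0 := by
  simp [ABpoly, ABnum]

lemma ABpoly_eval_zero (lam : ℂ) (n : ℕ) : ABpoly lam n 0 = ABnum lam n := by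
  rw [ABpoly, sum_eq_single_of_mem n (self_mem_range_succ n)]
  · simp
  · intro k hk hkn
    simp [zero_pow (Nat.sub_ne_zero_of_lt (lt_of_le_of_ne (mem_range_succ_iff.mp hk) hkn))]

lemma ABpoly_eval_one {lam : ℂ} (hlam1 : lam ≠ 1) (n : ℕ) :
    lam * ABpoly lam n 1 = ABnum lam n + if n = 1 then 1 else 0 := by
  cases n with
  | zero => simp [ABpoly, ABnum]
  | succ m =>
    have hrec := ABnum_succ lam m
    rw [eq_div_iff (sub_ne_zero.mpr hlam1)] at hrec
    simp only [ABpoly, one_pow, mul_one]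
    rw [sum_range_succ, Nat.choose_self, Nat.cast_one, one_mul]
    simp only [Nat.add_eq_right]
    linear_combination hrec

lemma hasDerivAt_ABpoly_succ (lam : ℂ) (n : ℕ) (x : ℂ) :
    HasDerivAt (ABpoly lam (n + 1)) ((n + 1) * ABpoly lam n x) x := by
  have h : HasDerivAt (ABpoly lam (n + 1)) _ x := HasDerivAt.fun_sum fun k _ =>
    (hasDerivAt_pow (n + 1 - k) x).const_mul (((n + 1).choose k : ℂ) * ABnum lam k)
  refine h.congr_deriv ?_
  rw [sum_range_succ, ABpoly, mul_sum]
  simp only [Nat.sub_self, Nat.cast_zero, zero_mul, mul_zero, add_zero]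
  refine sum_congr rfl fun k hk => ?_
  have hkn := mem_range_succ_iff.mp hk
  have hchoose : ((n + 1 : ℕ) : ℂ) * n.choose k = (n + 1).choose k * (n + 1 - k : ℕ) := by
    exact_mod_cast (Nat.add_one_mul_choose_eq n k).trans (Nat.choose_succ_right_eq (n + 1) k)
  rw [show n + 1 - k - 1 = n - k by omega]
  push_cast at hchoose
  linear_combination -(ABnum lam k * x ^ (n - k)) * hchoose

lemma continuous_ABpoly (lam : ℂ) (n : ℕ) : Continuous (ABpoly lam n) := by
  unfold ABpoly; fun_prop

noncomputable def twistedABpoly (lam : ℂ) (n : ℕ) (x : ℝ) : ℂ :=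
  exp (x * log lam) * ABpoly lam n x

lemma continuous_twistedABpoly (lam : ℂ) (n : ℕ) : Continuous (twistedABpoly lam n) := by
  have := continuous_ABpoly lam n
  unfold twistedABpoly; fun_prop

lemma twistedABpoly_one {lam : ℂ} (hlam0 : lam ≠ 0) (hlam1 : lam ≠ 1) (n : ℕ) :
    twistedABpoly lam n 1 = twistedABpoly lam n 0 + if n = 1 then 1 else 0 := by
  simp only [twistedABpoly, ofReal_one, ofReal_zero, one_mul, zero_mul, Complex.exp_zero,
    exp_log hlam0, ABpoly_eval_one hlam1, ABpoly_eval_zero]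

lemma hasDerivAt_twistedABpoly_succ (lam : ℂ) (n : ℕ) (x : ℝ) :
    HasDerivAt (twistedABpoly lam (n + 1))
      (log lam * twistedABpoly lam (n + 1) x + (n + 1) * twistedABpoly lam n x) x := by
  have hexp : HasDerivAt (fun y : ℝ => exp (y * log lam)) (exp (x * log lam) * log lam) x :=
    ((hasDerivAt_id (x : ℂ)).mul_const (log lam)).cexp.comp_ofReal.congr_deriv (by simp)
  refine (hexp.mul (hasDerivAt_ABpoly_succ lam n x).comp_ofReal).congr_deriv ?_
  simp only [twistedABpoly]
  ring

lemma fourierCoeffOn_twistedABpoly_succ {lam : ℂ} (hlam0 : lam ≠ 0) (hlam1 : lam ≠ 1)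
    (n : ℕ) (k : ℤ) :
    (2 * π * I * k - log lam) * fourierCoeffOn zero_lt_one (twistedABpoly lam (n + 1)) k =
      (n + 1) * fourierCoeffOn zero_lt_one (twistedABpoly lam n) k - if n = 0 then 1 else 0 := by
  have h := fourierCoeffOn_zero_one_deriv (fun x _ => hasDerivAt_twistedABpoly_succ lam n x)
    ((by have := continuous_twistedABpoly lam; fun_prop : Continuous _).intervalIntegrable 0 1) k
  rw [fourierCoeffOn_zero_one_const_mul_add_const_mul (continuous_twistedABpoly lam (n + 1))
    (continuous_twistedABpoly lam n), twistedABpoly_one hlam0 hlam1] at h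
  simp only [Nat.add_eq_right] at h
  linear_combination -h

lemma fourierCoeffOn_twistedABpoly {lam : ℂ} (hlam0 : lam ≠ 0) (hlam1 : lam ≠ 1)
    {n : ℕ} (hn : n ≠ 0) (k : ℤ) :
    fourierCoeffOn zero_lt_one (twistedABpoly lam n) k =
      -n ! / (2 * π * I * k - log lam) ^ n := by
  refine eq_neg_factorial_div_pow_of_recurrence
    (c := fun n => fourierCoeffOn zero_lt_one (twistedABpoly lam n) k) ?_
    (fun n => fourierCoeffOn_twistedABpoly_succ hlam0 hlam1 n k) hn
  simp [fourierCoeffOn_zero_one_eq_integral, twistedABpoly, ABpoly_zero]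

theorem apostol_bernoulli_fourier_series (lam : ℂ) (hlam0 : lam ≠ 0) (hlam1 : lam ≠ 1)
    (n : ℕ) (hn : 2 ≤ n) (x : ℝ) (hx : x ∈ Set.Icc (0:ℝ) 1) :
    Summable (fun k : ℤ => ‖Complex.exp (2 * Real.pi * Complex.I * k * x) /
        (2 * Real.pi * Complex.I * k - Complex.log lam) ^ n‖) ∧
    ABpoly lam n x = -((n.factorial : ℂ) / Complex.exp (x * Complex.log lam)) *
        ∑' k : ℤ, Complex.exp (2 * Real.pi * Complex.I * k * x) /
          (2 * Real.pi * Complex.I * k - Complex.log lam) ^ n := by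
  have hfact : (n ! : ℂ) ≠ 0 := Nat.cast_ne_zero.mpr n.factorial_ne_zero
  have hsum := summable_norm_inv_two_pi_I_mul_int_sub_pow (log lam) hn
  have hcoeff := fourierCoeffOn_twistedABpoly hlam0 hlam1 (n := n) (by omega)
  have hper : twistedABpoly lam n 0 = twistedABpoly lam n 1 := by
    simp [twistedABpoly_one hlam0 hlam1, show n ≠ 1 by omega]
  have hcoeff_sum : Summable (fourierCoeffOn zero_lt_one (twistedABpoly lam n)) :=
    .of_norm ((hsum.mul_left (n ! : ℝ)).congr fun k => by simp [hcoeff, div_eq_mul_inv])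
  have h := hasSum_fourierCoeffOn_zero_one_mul_exp (continuous_twistedABpoly lam n).continuousOn
    hper hcoeff_sum hx
  simp only [hcoeff] at h
  refine ⟨hsum.congr fun k => by simp [norm_exp, div_eq_mul_inv], ?_⟩
  have htsum : ∑' k : ℤ, exp (2 * π * I * k * x) / (2 * π * I * k - log lam) ^ n =
      twistedABpoly lam n x / -n ! := by
    rw [← (h.div_const (-n ! : ℂ)).tsum_eq]
    congr 1 with k
    field_simp
  rw [htsum, twistedABpoly]
  field_simp
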